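/- The function uₘ(z) = m + Φ(z) + ψ⁺(z)·φ(z)/(1 − Φ(z)) is strictly increasing in z. -/

import Mathlib

/-!
With `Q = 1 - Φ` one has `ψ⁺ = φ - zQ`, `ψ⁺' = -Q` and `φ' = -zφ`, so the derivative
`φ + ((ψ⁺φ)'Q + ψ⁺φ²)/Q²` of `uₘ` collapses to `ψ⁺²φ/Q²`. This is positive because `0 < Φ < 1`
and `ψ⁺(z) = ∫_{t ≤ -z} (-z - t) φ(t) dt` is the integral of a positive function.
-/

noncomputable def stdGaussPdf (x : ℝ) : ℝ :=
  (Real.sqrt (2 * Real.pi))⁻¹ * Real.exp (-x ^ 2 / 2)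

noncomputable def stdGaussCdf (x : ℝ) : ℝ := ∫ t in Set.Iic x, stdGaussPdf t

noncomputable def psiPlus (z : ℝ) : ℝ := stdGaussPdf z - z * stdGaussCdf (-z)

noncomputable def uFun (m : ℕ) (z : ℝ) : ℝ :=
  m + stdGaussCdf z + psiPlus z * stdGaussPdf z / (1 - stdGaussCdf z)

open Real MeasureTheory Set ProbabilityTheory

theorem setIntegral_pos_of_forall_pos {α : Type*} [MeasurableSpace α] {μ : Measure α}
    {s : Set α} {f : α → ℝ} (hs : MeasurableSet s) (hμ : 0 < μ s) (hf : ∀ x ∈ s, 0 < f x)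
    (hfi : IntegrableOn f s μ) : 0 < ∫ x in s, f x ∂μ := by
  have hnonneg : 0 ≤ᵐ[μ.restrict s] f :=
    (ae_restrict_iff' hs).2 (ae_of_all _ fun x hx => (hf x hx).le)
  rw [setIntegral_pos_iff_support_of_nonneg_ae hnonneg hfi,
    inter_eq_right.2 fun x hx => Function.mem_support.2 (hf x hx).ne']
  exact hμ

theorem hasDerivAt_integral_Iic {E : Type*} [NormedAddCommGroup E] [NormedSpace ℝ E]
    [CompleteSpace E] {f : ℝ → E} (hf : Continuous f) (hfi : Integrable f) (x : ℝ) :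
    HasDerivAt (fun y => ∫ t in Iic y, f t) (f x) x := by
  have hsplit : (fun y => ∫ t in Iic y, f t) =
      fun y => (∫ t in Iic 0, f t) + ∫ t in (0)..y, f t := by
    funext y
    rw [← intervalIntegral.integral_Iic_sub_Iic hfi.integrableOn hfi.integrableOn]
    abel
  rw [hsplit]
  exact (intervalIntegral.integral_hasDerivAt_right hfi.intervalIntegrable
    hf.aestronglyMeasurable.stronglyMeasurableAtFilter hf.continuousAt).const_add _

theorem stdGaussPdf_eq_gaussianPDFReal : stdGaussPdf = gaussianPDFReal 0 1 := by
  funext x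
  simp [stdGaussPdf, gaussianPDFReal]

theorem stdGaussPdf_pos (x : ℝ) : 0 < stdGaussPdf x := by
  rw [stdGaussPdf_eq_gaussianPDFReal]
  exact gaussianPDFReal_pos _ _ _ one_ne_zero

theorem stdGaussPdf_neg (x : ℝ) : stdGaussPdf (-x) = stdGaussPdf x := by
  simp [stdGaussPdf]

theorem continuous_stdGaussPdf : Continuous stdGaussPdf := by
  unfold stdGaussPdf
  fun_prop

theorem integrable_stdGaussPdf : Integrable stdGaussPdf := by
  rw [stdGaussPdf_eq_gaussianPDFReal]
  exact integrable_gaussianPDFReal _ _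

theorem integral_stdGaussPdf : ∫ x, stdGaussPdf x = 1 := by
  rw [stdGaussPdf_eq_gaussianPDFReal]
  exact integral_gaussianPDFReal_eq_one _ one_ne_zero

theorem hasDerivAt_stdGaussPdf (x : ℝ) : HasDerivAt stdGaussPdf (-x * stdGaussPdf x) x := by
  have hexp : HasDerivAt (fun x : ℝ => -x ^ 2 / 2) (-x) x :=
    ((hasDerivAt_pow 2 x).fun_neg.div_const 2).congr_deriv (by ring)
  refine (hexp.exp.const_mul (Real.sqrt (2 * π))⁻¹).congr_deriv ?_
  rw [stdGaussPdf]
  ring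

theorem integrable_mul_stdGaussPdf : Integrable fun t => t * stdGaussPdf t := by
  refine ((integrable_mul_exp_neg_mul_sq (b := 1 / 2) (by norm_num)).const_mul
    (Real.sqrt (2 * π))⁻¹).congr (ae_of_all _ fun x => ?_)
  simp only [stdGaussPdf]
  ring_nf

theorem setIntegral_Iic_mul_stdGaussPdf (a : ℝ) :
    ∫ t in Iic a, t * stdGaussPdf t = -stdGaussPdf a := by
  have hderiv : ∀ x ∈ Iic a, HasDerivAt (fun t => -stdGaussPdf t) (x * stdGaussPdf x) x :=
    fun x _ => by simpa using (hasDerivAt_stdGaussPdf x).fun_neg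
  have hlim := tendsto_zero_of_hasDerivAt_of_integrableOn_Iic hderiv
    integrable_mul_stdGaussPdf.integrableOn integrable_stdGaussPdf.neg.integrableOn
  rw [integral_Iic_of_hasDerivAt_of_tendsto' hderiv integrable_mul_stdGaussPdf.integrableOn hlim,
    sub_zero]

theorem hasDerivAt_stdGaussCdf (x : ℝ) : HasDerivAt stdGaussCdf (stdGaussPdf x) x :=
  hasDerivAt_integral_Iic continuous_stdGaussPdf integrable_stdGaussPdf x

theorem stdGaussCdf_neg (z : ℝ) : stdGaussCdf (-z) = 1 - stdGaussCdf z := by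
  have htail : stdGaussCdf (-z) = ∫ t in Ioi z, stdGaussPdf t := by
    simpa [stdGaussCdf, stdGaussPdf_neg] using (integral_comp_neg_Ioi z stdGaussPdf).symm
  have htotal := intervalIntegral.integral_Iic_add_Ioi (b := z) (μ := volume)
    integrable_stdGaussPdf.integrableOn integrable_stdGaussPdf.integrableOn
  rw [integral_stdGaussPdf] at htotal
  rw [htail, stdGaussCdf]
  linarith

theorem stdGaussCdf_pos (z : ℝ) : 0 < stdGaussCdf z :=
  setIntegral_pos_of_forall_pos measurableSet_Iic (by simp) (fun x _ => stdGaussPdf_pos x)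
    integrable_stdGaussPdf.integrableOn

theorem stdGaussCdf_lt_one (z : ℝ) : stdGaussCdf z < 1 := by
  linarith [stdGaussCdf_neg z, stdGaussCdf_pos (-z)]

theorem psiPlus_eq_setIntegral (z : ℝ) :
    psiPlus z = ∫ t in Iic (-z), (-z - t) * stdGaussPdf t := by
  simp_rw [sub_mul]
  rw [integral_sub (integrable_stdGaussPdf.const_mul _).integrableOn
    integrable_mul_stdGaussPdf.integrableOn, integral_const_mul,
    setIntegral_Iic_mul_stdGaussPdf, stdGaussPdf_neg, psiPlus, stdGaussCdf]
  ring

theorem psiPlus_pos (z : ℝ) : 0 < psiPlus z := by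
  rw [psiPlus_eq_setIntegral, integral_Iic_eq_integral_Iio]
  refine setIntegral_pos_of_forall_pos measurableSet_Iio (by simp)
    (fun t ht => mul_pos (sub_pos.2 ht) (stdGaussPdf_pos t)) ?_
  simp_rw [sub_mul]
  exact ((integrable_stdGaussPdf.const_mul _).sub integrable_mul_stdGaussPdf).integrableOn

theorem psiPlus_eq (z : ℝ) : psiPlus z = stdGaussPdf z - z * (1 - stdGaussCdf z) := by
  rw [psiPlus, stdGaussCdf_neg]

theorem hasDerivAt_psiPlus (z : ℝ) : HasDerivAt psiPlus (-(1 - stdGaussCdf z)) z := by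
  have hfun : psiPlus = fun y => stdGaussPdf y - y * (1 - stdGaussCdf y) := funext psiPlus_eq
  rw [hfun]
  refine ((hasDerivAt_stdGaussPdf z).sub ((hasDerivAt_id z).mul
    ((hasDerivAt_const z 1).sub (hasDerivAt_stdGaussCdf z)))).congr_deriv ?_
  simp only [id, Pi.sub_apply]
  ring

theorem hasDerivAt_uFun (m : ℕ) (z : ℝ) :
    HasDerivAt (uFun m) (psiPlus z ^ 2 * stdGaussPdf z / (1 - stdGaussCdf z) ^ 2) z := by
  have hQ : 1 - stdGaussCdf z ≠ 0 := (sub_pos.2 (stdGaussCdf_lt_one z)).ne'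
  have hfrac := ((hasDerivAt_psiPlus z).mul (hasDerivAt_stdGaussPdf z)).div
    ((hasDerivAt_const z 1).sub (hasDerivAt_stdGaussCdf z)) hQ
  refine (((hasDerivAt_const z (m : ℝ)).add (hasDerivAt_stdGaussCdf z)).add
    hfrac).congr_deriv ?_
  simp only [Pi.mul_apply, Pi.sub_apply, psiPlus_eq]
  field_simp
  ring

theorem stmt11_general (m : ℕ) : StrictMono (uFun m) := by
  refine strictMono_of_deriv_pos fun z => ?_
  rw [(hasDerivAt_uFun m z).deriv]
  have hQ : 0 < 1 - stdGaussCdf z := sub_pos.2 (stdGaussCdf_lt_one z)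
  have hψ := psiPlus_pos z
  have hφ := stdGaussPdf_pos z
  positivity

/-- `uₘ(z) = m + Φ(z) + ψ⁺(z)·φ(z)/(1 − Φ(z))` is strictly increasing in `z`. -/
theorem stmt11 (m : ℕ) (hm : 1 ≤ m) : StrictMono (uFun m) :=
  stmt11_general m
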